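/- Let m ∈ ℕ₀, p ∈ ℕ with 0 ≤ m ≤ p, and suppose f(z) = Σ_{k=0}^∞ a_{kp+m} z^{kp+m} is holomorphic on 𝔻 with |f| ≤ 1. Then for all 0 ≤ r < 1: Σ_{k=1}^∞ |a_{2kp+m}| r^{2kp+m} ≤ (r^{2p−m}/(1−r^{2p})) (r^{2m} − |a_m|² r^{2m}), i.e. ≤ (r^{2p+m}/(1−r^{2p}))(1 − |a_m|²). -/

import Mathlib

/-!
Write `f z = z ^ m * h (z ^ p)` with `h w = ∑ c k * w ^ k`; the maximum modulus principle on
circles of radius tending to `1` gives `‖h‖ ≤ 1` on the unit disc. Averaging `h` over the `k`-th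
roots of unity yields the bounded function `H u = ∑ c (j * k) * u ^ j`, and the Schwarz–Pick
inequality `‖H' 0‖ ≤ 1 - ‖H 0‖ ^ 2` is Wiener's inequality `‖c k‖ ≤ 1 - ‖c 0‖ ^ 2` for `k ≥ 1`.
The tail is then dominated by a geometric series.
-/

open Metric Set Filter FormalMultilinearSeries ComplexConjugate
open scoped Topology

theorem hasFPowerSeriesOnBall_ofScalars_of_hasSum {a : ℕ → ℂ} {h : ℂ → ℂ}
    (hh : ∀ w : ℂ, ‖w‖ < 1 → HasSum (fun j => a j * w ^ j) (h w)) :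
    HasFPowerSeriesOnBall h (ofScalars ℂ a) 0 1 where
  r_le := by
    refine ENNReal.le_of_forall_nnreal_lt fun r hr => ?_
    have hr1 : ‖((r : ℝ) : ℂ)‖ < 1 := by simpa using hr
    refine (ofScalars ℂ a).le_radius_of_tendsto (l := 0) ?_
    simpa [ofScalars_norm] using (hh _ hr1).summable.tendsto_atTop_zero.norm
  r_pos := one_pos
  hasSum {y} hy := by
    have hy1 : ‖y‖ < 1 := by simpa [← ENNReal.coe_one, eball_coe] using hy
    simpa [ofScalars_apply_eq', mul_comm] using hh y hy1

theorem differentiableOn_of_hasSum_mul_pow {a : ℕ → ℂ} {h : ℂ → ℂ}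
    (hh : ∀ w : ℂ, ‖w‖ < 1 → HasSum (fun j => a j * w ^ j) (h w)) :
    DifferentiableOn ℂ h (ball 0 1) := by
  simpa [← ENNReal.coe_one, eball_coe] using
    (hasFPowerSeriesOnBall_ofScalars_of_hasSum hh).differentiableOn

theorem exists_pow_eq_norm_lt_one {n : ℕ} (hn : n ≠ 0) {w : ℂ} (hw : ‖w‖ < 1) :
    ∃ z : ℂ, z ^ n = w ∧ ‖z‖ < 1 := by
  obtain ⟨z, rfl⟩ := IsAlgClosed.exists_pow_nat_eq w (Nat.pos_of_ne_zero hn)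
  exact ⟨z, rfl, (pow_lt_one_iff_of_nonneg (norm_nonneg z) hn).mp (by rwa [← norm_pow])⟩

theorem norm_le_one_of_norm_pow_mul_le_one {g : ℂ → ℂ} (hg : DifferentiableOn ℂ g (ball 0 1))
    {m : ℕ} (hb : ∀ z ∈ ball (0 : ℂ) 1, ‖z ^ m * g z‖ ≤ 1) {z : ℂ} (hz : z ∈ ball (0 : ℂ) 1) :
    ‖g z‖ ≤ 1 := by
  rw [mem_ball_zero_iff] at hz
  have hle : ∀ s ∈ Ioo ‖z‖ 1, ‖g z‖ ≤ (s ^ m)⁻¹ := by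
    rintro s ⟨hzs, hs1⟩
    have hs0 : 0 < s := (norm_nonneg z).trans_lt hzs
    refine Complex.norm_le_of_forall_mem_frontier_norm_le isBounded_ball
      (hg.diffContOnCl_ball (closedBall_subset_ball hs1)) (fun w hw => ?_)
      (subset_closure (mem_ball_zero_iff.mpr hzs))
    rw [frontier_ball 0 hs0.ne', mem_sphere_zero_iff_norm] at hw
    have hw1 := hb w (mem_ball_zero_iff.mpr (hw.trans_lt hs1))
    rw [norm_mul, norm_pow, hw] at hw1
    rw [← one_div, le_div_iff₀ (pow_pos hs0 m)]
    linarith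
  have hlim : Tendsto (fun s : ℝ => (s ^ m)⁻¹) (𝓝[<] 1) (𝓝 1) := by
    simpa using
      (((continuous_pow (M := ℝ) m).tendsto 1).inv₀ (by simp)).mono_left nhdsWithin_le_nhds
  exact ge_of_tendsto hlim (eventually_of_mem (Ioo_mem_nhdsLT hz) hle)

theorem norm_sub_le_norm_one_sub_conj_mul {b w : ℂ} (hb : ‖b‖ ≤ 1) (hw : ‖w‖ ≤ 1) :
    ‖w - b‖ ≤ ‖1 - conj b * w‖ := by
  have key : Complex.normSq (1 - conj b * w) - Complex.normSq (w - b)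
      = (1 - Complex.normSq b) * (1 - Complex.normSq w) := by
    simp only [Complex.normSq_apply, Complex.sub_re, Complex.sub_im, Complex.mul_re,
      Complex.mul_im, Complex.one_re, Complex.one_im, Complex.conj_re, Complex.conj_im]
    ring
  rw [Complex.normSq_eq_norm_sq, Complex.normSq_eq_norm_sq, Complex.normSq_eq_norm_sq,
    Complex.normSq_eq_norm_sq] at key
  have hb2 : ‖b‖ ^ 2 ≤ 1 := pow_le_one₀ (norm_nonneg b) hb
  have hw2 : ‖w‖ ^ 2 ≤ 1 := pow_le_one₀ (norm_nonneg w) hw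
  refine (pow_le_pow_iff_left₀ (norm_nonneg _) (norm_nonneg _) two_ne_zero).mp ?_
  nlinarith [mul_nonneg (sub_nonneg.mpr hb2) (sub_nonneg.mpr hw2)]

theorem norm_deriv_zero_le_one_sub_sq {g : ℂ → ℂ} (hg : DifferentiableOn ℂ g (ball 0 1))
    (hb : ∀ z ∈ ball (0 : ℂ) 1, ‖g z‖ ≤ 1) : ‖deriv g 0‖ ≤ 1 - ‖g 0‖ ^ 2 := by
  have h0 : (0 : ℂ) ∈ ball (0 : ℂ) 1 := mem_ball_self one_pos
  rcases (hb 0 h0).eq_or_lt with hg0 | hg0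
  · have hmax : IsMaxOn (norm ∘ g) (ball 0 1) 0 := fun z hz => (hb z hz).trans hg0.ge
    have hconst : g =ᶠ[𝓝 0] fun _ => g 0 :=
      eventually_of_mem (ball_mem_nhds 0 one_pos) (Complex.eqOn_of_isPreconnected_of_isMaxOn_norm
        (convex_ball 0 1).isPreconnected isOpen_ball hg h0 hmax)
    rw [hconst.deriv_eq, deriv_const, hg0]
    simp
  · -- compose with the disc automorphism sending `g 0` to `0` and apply the Schwarz lemma
    set b := g 0
    have hden : ∀ z ∈ ball (0 : ℂ) 1, 1 - conj b * g z ≠ 0 := fun z hz => by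
      refine sub_ne_zero.mpr fun h => ?_
      have : ‖conj b * g z‖ < 1 := by
        rw [norm_mul, Complex.norm_conj]
        nlinarith [hb z hz, norm_nonneg b, norm_nonneg (g z)]
      rw [← h, norm_one] at this
      exact this.false
    set G : ℂ → ℂ := fun z => (g z - b) / (1 - conj b * g z)
    have hGd : DifferentiableOn ℂ G (ball 0 1) :=
      (hg.sub_const b).div ((differentiableOn_const 1).sub (hg.const_mul _)) hden
    have hGmaps : MapsTo G (ball 0 1) (closedBall (G 0) 1) := fun z hz => by
      rw [show G 0 = 0 by simp [G, b], mem_closedBall_zero_iff, norm_div]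
      exact div_le_one_of_le₀ (norm_sub_le_norm_one_sub_conj_mul hg0.le (hb z hz)) (norm_nonneg _)
    have hpos : 0 < 1 - ‖b‖ ^ 2 := by nlinarith [norm_nonneg b]
    have hden0 : 1 - conj b * g 0 = ((1 - ‖b‖ ^ 2 : ℝ) : ℂ) := by
      rw [Complex.conj_mul']; push_cast; ring
    have hGderiv : HasDerivAt G (deriv g 0 / ((1 - ‖b‖ ^ 2 : ℝ) : ℂ)) 0 := by
      have hgd := (hg.differentiableAt (ball_mem_nhds 0 one_pos)).hasDerivAt
      refine ((hgd.sub_const b).div ((hgd.const_mul (conj b)).const_sub 1)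
        (hden 0 h0)).congr_deriv ?_
      have hne : ((1 - ‖b‖ ^ 2 : ℝ) : ℂ) ≠ 0 := by exact_mod_cast hpos.ne'
      rw [sub_self, zero_mul, sub_zero, hden0]
      field_simp
    have hS := Complex.norm_deriv_le_one_of_mapsTo_ball hGd hGmaps one_pos
    rwa [hGderiv.deriv, norm_div, Complex.norm_real, Real.norm_of_nonneg hpos.le,
      div_le_one hpos] at hS

theorem IsPrimitiveRoot.geom_sum_pow_eq_ite {R : Type*} [CommRing R] [IsDomain R] {ζ : R} {k : ℕ}
    (hζ : IsPrimitiveRoot ζ k) (j : ℕ) :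
    ∑ t ∈ Finset.range k, (ζ ^ j) ^ t = if k ∣ j then (k : R) else 0 := by
  split_ifs with hkj
  · simp [(hζ.pow_eq_one_iff_dvd j).mpr hkj]
  · have hne : ζ ^ j - 1 ≠ 0 := sub_ne_zero.mpr fun h => hkj ((hζ.pow_eq_one_iff_dvd j).mp h)
    have hgeom := geom_sum_mul (ζ ^ j) k
    rw [← pow_mul, mul_comm j k, pow_mul, hζ.pow_eq_one, one_pow, sub_self] at hgeom
    exact (mul_eq_zero.mp hgeom).resolve_right hne

theorem hasSum_coeff_mul_pow_eq_average {a : ℕ → ℂ} {h : ℂ → ℂ}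
    (hh : ∀ w : ℂ, ‖w‖ < 1 → HasSum (fun j => a j * w ^ j) (h w))
    {k : ℕ} (hk : k ≠ 0) {ζ : ℂ} (hζ : IsPrimitiveRoot ζ k) {w : ℂ} (hw : ‖w‖ < 1) :
    HasSum (fun j => a (j * k) * (w ^ k) ^ j)
      ((k : ℂ)⁻¹ * ∑ t ∈ Finset.range k, h (ζ ^ t * w)) := by
  have hrot : ∀ t ∈ Finset.range k, HasSum (fun j => (k : ℂ)⁻¹ * (a j * (ζ ^ t * w) ^ j))
      ((k : ℂ)⁻¹ * h (ζ ^ t * w)) := fun t _ =>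
    (hh _ (by rwa [norm_mul, norm_pow, hζ.norm'_eq_one hk, one_pow, one_mul])).mul_left _
  have hfilter : ∀ j, ∑ t ∈ Finset.range k, (k : ℂ)⁻¹ * (a j * (ζ ^ t * w) ^ j)
      = if k ∣ j then a j * w ^ j else 0 := fun j => by
    have hterm : ∀ t, (k : ℂ)⁻¹ * (a j * (ζ ^ t * w) ^ j)
        = (k : ℂ)⁻¹ * (a j * w ^ j) * (ζ ^ j) ^ t := fun t => by ring
    rw [Finset.sum_congr rfl fun t _ => hterm t, ← Finset.mul_sum, hζ.geom_sum_pow_eq_ite]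
    split_ifs
    · field_simp
    · rw [mul_zero]
  have hsum := hasSum_sum hrot
  simp only [hfilter, ← Finset.mul_sum] at hsum
  rw [← (mul_left_injective₀ hk).hasSum_iff] at hsum
  · simpa only [Function.comp_def, dvd_mul_left, if_true, ← pow_mul, mul_comm k] using hsum
  · intro j hj
    rw [if_neg]
    rintro ⟨i, rfl⟩
    exact hj ⟨i, mul_comm i k⟩

theorem norm_coeff_le_one_sub_sq {a : ℕ → ℂ} {h : ℂ → ℂ}
    (hh : ∀ w : ℂ, ‖w‖ < 1 → HasSum (fun j => a j * w ^ j) (h w))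
    (hb : ∀ w : ℂ, ‖w‖ < 1 → ‖h w‖ ≤ 1) {k : ℕ} (hk : k ≠ 0) :
    ‖a k‖ ≤ 1 - ‖a 0‖ ^ 2 := by
  obtain ⟨ζ, hζ⟩ : ∃ ζ : ℂ, IsPrimitiveRoot ζ k := ⟨_, Complex.isPrimitiveRoot_exp k hk⟩
  set H : ℂ → ℂ := fun u => ∑' j, a (j * k) * u ^ j
  have hH : ∀ u : ℂ, ‖u‖ < 1 → HasSum (fun j => a (j * k) * u ^ j) (H u) ∧ ‖H u‖ ≤ 1 := by
    intro u hu
    obtain ⟨w, rfl, hw⟩ := exists_pow_eq_norm_lt_one hk hu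
    have hsum := hasSum_coeff_mul_pow_eq_average hh hk hζ hw
    refine ⟨hsum.summable.hasSum, ?_⟩
    rw [show H (w ^ k) = _ from hsum.tsum_eq, norm_mul, norm_inv, Complex.norm_natCast]
    refine (inv_mul_le_one₀ (by positivity)).mpr ?_
    calc ‖∑ t ∈ Finset.range k, h (ζ ^ t * w)‖
        ≤ ∑ t ∈ Finset.range k, ‖h (ζ ^ t * w)‖ := norm_sum_le _ _
      _ ≤ ∑ t ∈ Finset.range k, 1 := Finset.sum_le_sum fun t _ => hb _ (by
          rwa [norm_mul, norm_pow, hζ.norm'_eq_one hk, one_pow, one_mul])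
      _ = k := by simp
  have hps := hasFPowerSeriesOnBall_ofScalars_of_hasSum fun u hu => (hH u hu).1
  have hH0 : a 0 = H 0 := by simpa using hps.hasFPowerSeriesAt.coeff_zero (fun _ => 0)
  have hH' : deriv H 0 = a k := by simpa using hps.hasFPowerSeriesAt.hasDerivAt.deriv
  rw [hH0, ← hH']
  exact norm_deriv_zero_le_one_sub_sq (differentiableOn_of_hasSum_mul_pow fun u hu => (hH u hu).1)
    fun u hu => (hH u (mem_ball_zero_iff.mp hu)).2

theorem exists_hasSum_pow_norm_le_one {m p : ℕ} (hp : p ≠ 0) {f : ℂ → ℂ} {c : ℕ → ℂ}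
    (hf : ∀ z : ℂ, ‖z‖ < 1 → HasSum (fun k => c k * z ^ (k * p + m)) (f z))
    (hb : ∀ z : ℂ, ‖z‖ < 1 → ‖f z‖ ≤ 1) :
    ∃ h : ℂ → ℂ, (∀ w : ℂ, ‖w‖ < 1 → HasSum (fun k => c k * w ^ k) (h w)) ∧
      ∀ w : ℂ, ‖w‖ < 1 → ‖h w‖ ≤ 1 := by
  set h : ℂ → ℂ := fun w => ∑' k, c k * w ^ k
  have hh : ∀ w : ℂ, ‖w‖ < 1 → HasSum (fun k => c k * w ^ k) (h w) := by
    intro w hw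
    refine Summable.hasSum ?_
    obtain ⟨z, rfl, hz⟩ := exists_pow_eq_norm_lt_one hp hw
    rcases eq_or_ne z 0 with rfl | hz0
    · exact (hasSum_single 0 fun k hk => by simp [zero_pow hp, hk]).summable
    · refine ((hf z hz).summable.div_const (z ^ m)).congr fun k => ?_
      rw [pow_add, ← mul_assoc, mul_div_cancel_right₀ _ (pow_ne_zero m hz0), ← pow_mul,
        mul_comm p k]
  have hfh : ∀ z : ℂ, ‖z‖ < 1 → z ^ m * h (z ^ p) = f z := fun z hz => by
    have hterm : ∀ k, c k * z ^ (k * p + m) = z ^ m * (c k * (z ^ p) ^ k) := fun k => by ring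
    refine HasSum.unique ?_ (hf z hz)
    simpa only [hterm] using
      (hh _ (by simpa using pow_lt_one₀ (norm_nonneg z) hz hp)).mul_left (z ^ m)
  refine ⟨h, hh, fun w hw => ?_⟩
  obtain ⟨z, rfl, hz⟩ := exists_pow_eq_norm_lt_one hp hw
  have hgd : DifferentiableOn ℂ (fun z => h (z ^ p)) (ball 0 1) :=
    (differentiableOn_of_hasSum_mul_pow hh).comp (differentiableOn_pow p) fun z hz => by
      simpa using pow_lt_one₀ (norm_nonneg z) (mem_ball_zero_iff.mp hz) hp
  refine norm_le_one_of_norm_pow_mul_le_one hgd (m := m) (fun z hz => ?_)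
    (mem_ball_zero_iff.mpr hz)
  rw [mem_ball_zero_iff] at hz
  rw [hfh z hz]
  exact hb z hz

theorem tsum_mul_geometric_le {x : ℕ → ℝ} {B a q : ℝ} (hx0 : ∀ k, 0 ≤ x k) (hxB : ∀ k, x k ≤ B)
    (ha : 0 ≤ a) (hq0 : 0 ≤ q) (hq1 : q < 1) :
    ∑' k, x k * (a * q ^ k) ≤ a / (1 - q) * B := by
  have hgeom : HasSum (fun k => a * q ^ k) (a / (1 - q)) := by
    simpa [div_eq_mul_inv] using (hasSum_geometric_of_lt_one hq0 hq1).mul_left a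
  have hle : ∀ k, x k * (a * q ^ k) ≤ B * (a * q ^ k) := fun k =>
    mul_le_mul_of_nonneg_right (hxB k) (by positivity)
  calc ∑' k, x k * (a * q ^ k)
      ≤ ∑' k, B * (a * q ^ k) :=
        (hgeom.summable.mul_left B).of_nonneg_of_le (fun k => mul_nonneg (hx0 k) (by positivity)) hle
          |>.tsum_le_tsum hle (hgeom.summable.mul_left B)
    _ = a / (1 - q) * B := by rw [(hgeom.mul_left B).tsum_eq, mul_comm]

theorem even_tail_bound_general (m p : ℕ) (hp : 1 ≤ p)
    (f : ℂ → ℂ) (c : ℕ → ℂ)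
    (hf : ∀ z : ℂ, ‖z‖ < 1 → HasSum (fun k : ℕ => c k * z ^ (k * p + m)) (f z))
    (hb : ∀ z : ℂ, ‖z‖ < 1 → ‖f z‖ ≤ 1)
    (r : ℝ) (hr0 : 0 ≤ r) (hr1 : r < 1) :
    ∑' k : ℕ, ‖c (2 * (k + 1))‖ * r ^ (2 * (k + 1) * p + m) ≤
      r ^ (2 * p + m) / (1 - r ^ (2 * p)) * (1 - ‖c 0‖ ^ 2) := by
  obtain ⟨h, hh, hhb⟩ := exists_hasSum_pow_norm_le_one (by omega) hf hb
  have hpow : ∀ k : ℕ, r ^ (2 * (k + 1) * p + m) = r ^ (2 * p + m) * (r ^ (2 * p)) ^ k :=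
    fun k => by rw [← pow_mul, ← pow_add]; ring_nf
  simp only [hpow]
  exact tsum_mul_geometric_le (fun _ => norm_nonneg _)
    (fun k => norm_coeff_le_one_sub_sq hh hhb (by omega)) (by positivity) (by positivity)
    (pow_lt_one₀ hr0 hr1 (by omega))

/-- One-dimensional version of Lemma 2.2: even-indexed tail bound. -/
theorem even_tail_bound (m p : ℕ) (hp : 1 ≤ p) (hm : m ≤ p)
    (f : ℂ → ℂ) (c : ℕ → ℂ)
    (hf : ∀ z : ℂ, ‖z‖ < 1 → HasSum (fun k : ℕ => c k * z ^ (k * p + m)) (f z))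
    (hb : ∀ z : ℂ, ‖z‖ < 1 → ‖f z‖ ≤ 1)
    (r : ℝ) (hr0 : 0 ≤ r) (hr1 : r < 1) :
    ∑' k : ℕ, ‖c (2 * (k + 1))‖ * r ^ (2 * (k + 1) * p + m) ≤
      r ^ (2 * p + m) / (1 - r ^ (2 * p)) * (1 - ‖c 0‖ ^ 2) :=
  even_tail_bound_general m p hp f c hf hb r hr0 hr1
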